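/- The encoding of LF objects into STLC terms preserves beta-reduction: if M beta-reduces to M' in LF then ⟨M⟩ beta-reduces to ⟨M'⟩ in STLC; consequently, if M is in beta-normal form then ⟨M⟩ is in beta-normal form. -/

import Mathlib

/- De Bruijn presentation of LF: kinds, types, objects (with meta-variables). -/
mutual
inductive LTy : Type where
  | const : Nat → LTy
  | pi : LTy → LTy → LTy
  | app : LTy → LObj → LTy
inductive LObj : Type where
  | const : Nat → LObj
  | var : Nat → LObj
  | mvar : Nat → LObj
  | app : LObj → LObj → LObj
  | lam : LTy → LObj → LObj
end

inductive LKind : Type where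
  | type : LKind
  | pi : LTy → LKind → LKind

mutual
def liftTy (d : Nat) : LTy → LTy
  | .const a => .const a
  | .pi A B => .pi (liftTy d A) (liftTy (d+1) B)
  | .app A M => .app (liftTy d A) (liftObj d M)
def liftObj (d : Nat) : LObj → LObj
  | .const c => .const c
  | .var k => if k < d then .var k else .var (k+1)
  | .mvar X => .mvar X
  | .app M N => .app (liftObj d M) (liftObj d N)
  | .lam A M => .lam (liftTy d A) (liftObj (d+1) M)
end

def liftKind (d : Nat) : LKind → LKind
  | .type => .type
  | .pi A K => .pi (liftTy d A) (liftKind (d+1) K)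

/- Capture-avoiding substitution of an object for de Bruijn variable d. -/
mutual
def substTy (d : Nat) (s : LObj) : LTy → LTy
  | .const a => .const a
  | .pi A B => .pi (substTy d s A) (substTy (d+1) (liftObj 0 s) B)
  | .app A M => .app (substTy d s A) (substObj d s M)
def substObj (d : Nat) (s : LObj) : LObj → LObj
  | .const c => .const c
  | .var k => if k = d then s else if d < k then .var (k-1) else .var k
  | .mvar X => .mvar X
  | .app M N => .app (substObj d s M) (substObj d s N)
  | .lam A M => .lam (substTy d s A) (substObj (d+1) (liftObj 0 s) M)
end

def substKind (d : Nat) (s : LObj) : LKind → LKind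
  | .type => .type
  | .pi A K => .pi (substTy d s A) (substKind (d+1) (liftObj 0 s) K)

/- Context lookup with the appropriate lifting. -/
inductive Lk : List LTy → Nat → LTy → Prop where
  | zero : Lk (A :: Γ) 0 (liftTy 0 A)
  | succ : Lk Γ k A → Lk (B :: Γ) (k+1) (liftTy 0 A)

/- LF typing judgments, relative to a signature (ts for kinds of type constants,
   os for types of object constants) and a meta-variable context Δ. -/
mutual
inductive WfKind (ts : Nat → LKind) (os : Nat → LTy) (Δ : Nat → LTy) :
    List LTy → LKind → Prop where
  | type : WfKind ts os Δ Γ .type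
  | pi : HasKind ts os Δ Γ A .type → WfKind ts os Δ (A :: Γ) K →
      WfKind ts os Δ Γ (.pi A K)
inductive HasKind (ts : Nat → LKind) (os : Nat → LTy) (Δ : Nat → LTy) :
    List LTy → LTy → LKind → Prop where
  | const : HasKind ts os Δ Γ (.const a) (ts a)
  | pi : HasKind ts os Δ Γ A .type → HasKind ts os Δ (A :: Γ) B .type →
      HasKind ts os Δ Γ (.pi A B) .type
  | app : HasKind ts os Δ Γ A (.pi B K) → HasTy ts os Δ Γ M B →
      HasKind ts os Δ Γ (.app A M) (substKind 0 M K)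
inductive HasTy (ts : Nat → LKind) (os : Nat → LTy) (Δ : Nat → LTy) :
    List LTy → LObj → LTy → Prop where
  | const : HasTy ts os Δ Γ (.const c) (os c)
  | var : Lk Γ k A → HasTy ts os Δ Γ (.var k) A
  | mvar : HasTy ts os Δ Γ (.mvar X) (Δ X)
  | lam : HasKind ts os Δ Γ A .type → HasTy ts os Δ (A :: Γ) M B →
      HasTy ts os Δ Γ (.lam A M) (.pi A B)
  | app : HasTy ts os Δ Γ M (.pi A B) → HasTy ts os Δ Γ N A →
      HasTy ts os Δ Γ (.app M N) (substTy 0 N B)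
end
/- Simple types with the two atomic types lf-obj and lf-type. -/
inductive STy : Type where
  | lfObj : STy
  | lfType : STy
  | arr : STy → STy → STy

/- The flattening map φ on LF types (base types go to lf-obj). -/
def phiTy : LTy → STy
  | .const _ => .lfObj
  | .app _ _ => .lfObj
  | .pi A B => .arr (phiTy A) (phiTy B)

/- The flattening map φ on LF kinds. -/
def phiKind : LKind → STy
  | .type => .lfType
  | .pi A K => .arr (phiTy A) (phiKind K)

/- Simply typed λ-terms (hohh terms), with meta-variables. -/
inductive Tm : Type where
  | const : Nat → Tm
  | var : Nat → Tm
  | mvar : Nat → Tm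
  | app : Tm → Tm → Tm
  | lam : STy → Tm → Tm

def liftTm (d : Nat) : Tm → Tm
  | .const c => .const c
  | .var k => if k < d then .var k else .var (k+1)
  | .mvar X => .mvar X
  | .app m n => .app (liftTm d m) (liftTm d n)
  | .lam τ m => .lam τ (liftTm (d+1) m)

def substTm (d : Nat) (s : Tm) : Tm → Tm
  | .const c => .const c
  | .var k => if k = d then s else if d < k then .var (k-1) else .var k
  | .mvar X => .mvar X
  | .app m n => .app (substTm d s m) (substTm d s n)
  | .lam τ m => .lam τ (substTm (d+1) (liftTm 0 s) m)

/- The lossy encoding ⟨·⟩ of LF objects as simply typed terms. -/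
def enc : LObj → Tm
  | .const c => .const c
  | .var k => .var k
  | .mvar X => .mvar X
  | .app M N => .app (enc M) (enc N)
  | .lam A M => .lam (phiTy A) (enc M)

/- STLC typing, relative to a signature cs and meta-variable typing ms. -/
inductive SHas (cs : Nat → STy) (ms : Nat → STy) : List STy → Tm → STy → Prop where
  | const : SHas cs ms Γ (.const c) (cs c)
  | var : Γ[k]? = some τ → SHas cs ms Γ (.var k) τ
  | mvar : SHas cs ms Γ (.mvar X) (ms X)
  | app : SHas cs ms Γ m (.arr τ σ) → SHas cs ms Γ n τ → SHas cs ms Γ (.app m n) σ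
  | lam : SHas cs ms (τ :: Γ) m σ → SHas cs ms Γ (.lam τ m) (.arr τ σ)

/- β-reduction on LF objects: (λx:A.M) N → M[N/x] and its compatible closure. -/
inductive OStep : LObj → LObj → Prop where
  | beta : OStep (.app (.lam A M) N) (substObj 0 N M)
  | app1 : OStep M M' → OStep (.app M N) (.app M' N)
  | app2 : OStep N N' → OStep (.app M N) (.app M N')
  | lam : OStep M M' → OStep (.lam A M) (.lam A M')

/- β-reduction on STLC terms. -/
inductive TStep : Tm → Tm → Prop where
  | beta : TStep (.app (.lam τ m) n) (substTm 0 n m)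
  | app1 : TStep m m' → TStep (.app m n) (.app m' n)
  | app2 : TStep n n' → TStep (.app m n) (.app m n')
  | lam : TStep m m' → TStep (.lam τ m) (.lam τ m')

/-!
The encoding only replaces the annotation `A` of each binder by `φ(A)` and φ ignores the
objects occurring in a type, so φ is invariant under lifting and substitution and ⟨·⟩
commutes with both. Hence ⟨·⟩ maps each β-redex to a β-redex and its contractum to the
contractum. Conversely ⟨·⟩ maps a non-λ to a non-λ, so every β-redex of ⟨M⟩ is the image
of a β-redex of `M`, which gives the statement about normal forms.
-/

theorem phiTy_liftTy (d : Nat) : ∀ A : LTy, phiTy (liftTy d A) = phiTy A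
  | .const _ => rfl
  | .pi A B => by simp only [liftTy, phiTy, phiTy_liftTy]
  | .app _ _ => rfl

theorem phiTy_substTy (d : Nat) (s : LObj) : ∀ A : LTy, phiTy (substTy d s A) = phiTy A
  | .const _ => rfl
  | .pi A B => by simp only [substTy, phiTy, phiTy_substTy]
  | .app _ _ => rfl

theorem enc_liftObj (d : Nat) : ∀ M : LObj, enc (liftObj d M) = liftTm d (enc M)
  | .const _ => rfl
  | .var k => by simp only [liftObj, liftTm, enc]; split <;> rfl
  | .mvar _ => rfl
  | .app M N => by simp only [liftObj, liftTm, enc, enc_liftObj]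
  | .lam A M => by simp only [liftObj, liftTm, enc, enc_liftObj, phiTy_liftTy]

theorem enc_substObj (d : Nat) (s : LObj) :
    ∀ M : LObj, enc (substObj d s M) = substTm d (enc s) (enc M)
  | .const _ => rfl
  | .var k => by simp only [substObj, substTm, enc]; split_ifs <;> rfl
  | .mvar _ => rfl
  | .app M N => by simp only [substObj, substTm, enc, enc_substObj]
  | .lam A M => by simp only [substObj, substTm, enc, enc_substObj, enc_liftObj, phiTy_substTy]

theorem OStep.tStep_enc {M M' : LObj} (h : OStep M M') : TStep (enc M) (enc M') := by
  induction h with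
  | beta => rw [enc_substObj]; exact .beta
  | app1 _ ih => exact .app1 ih
  | app2 _ ih => exact .app2 ih
  | lam _ ih => exact .lam ih

theorem exists_of_enc_eq_app {M : LObj} {m n : Tm} (h : enc M = .app m n) :
    ∃ P N, M = .app P N ∧ enc P = m ∧ enc N = n := by
  cases M <;> simp only [enc, reduceCtorEq, Tm.app.injEq] at h
  exact ⟨_, _, rfl, h⟩

theorem exists_of_enc_eq_lam {M : LObj} {τ : STy} {m : Tm} (h : enc M = .lam τ m) :
    ∃ A P, M = .lam A P ∧ enc P = m := by
  cases M <;> simp only [enc, reduceCtorEq, Tm.lam.injEq] at h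
  exact ⟨_, _, rfl, h.2⟩

theorem TStep.exists_oStep_of_eq_enc {e t : Tm} (h : TStep e t) :
    ∀ M : LObj, enc M = e → ∃ M', OStep M M' := by
  induction h with
  | beta =>
    intro M hM
    obtain ⟨L, N, rfl, hL, -⟩ := exists_of_enc_eq_app hM
    obtain ⟨A, P, rfl, -⟩ := exists_of_enc_eq_lam hL
    exact ⟨_, .beta⟩
  | app1 _ ih =>
    intro M hM
    obtain ⟨P, N, rfl, hP, -⟩ := exists_of_enc_eq_app hM
    obtain ⟨P', hstep⟩ := ih P hP
    exact ⟨_, .app1 (N := N) hstep⟩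
  | app2 _ ih =>
    intro M hM
    obtain ⟨P, N, rfl, -, hN⟩ := exists_of_enc_eq_app hM
    obtain ⟨N', hstep⟩ := ih N hN
    exact ⟨_, .app2 (M := P) hstep⟩
  | lam _ ih =>
    intro M hM
    obtain ⟨A, P, rfl, hP⟩ := exists_of_enc_eq_lam hM
    obtain ⟨P', hstep⟩ := ih P hP
    exact ⟨_, .lam (A := A) hstep⟩

/-- The encoding preserves β-reduction: if M →β M' in LF then ⟨M⟩ →β ⟨M'⟩ in
    STLC; consequently if M is β-normal then ⟨M⟩ is β-normal. -/
theorem encoding_preserves_beta_reduction :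
    (∀ M M', OStep M M' → TStep (enc M) (enc M')) ∧
    (∀ M : LObj, (∀ M', ¬ OStep M M') → ∀ t, ¬ TStep (enc M) t) :=
  ⟨fun _ _ h => h.tStep_enc, fun M hnf _ ht =>
    let ⟨M', hstep⟩ := ht.exists_oStep_of_eq_enc M rfl
    hnf M' hstep⟩
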